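/- arXiv:1208.6401 — 5 statements merged into one kernel-verified Lean document; each statement's English description precedes it below -/
import Mathlib

section
/- Let f : ℝⁿ → ℝ be measurable, nonnegative, and positively homogeneous of degree d > 0 (d ∈ ℝ), with bounded sublevel set G = {x : f(x) ≤ 1}. Then for every k ∈ ℕ and every multi-index α ∈ ℕⁿ, ∫_G x^α f(x)^k dx = ((n + |α|)/(n + kd + |α|)) ∫_G x^α dx, where the integrals are with respect to Lebesgue measure. -/
/-!
Write `M = ∫_{f ≤ 1} x^α` and `p = (n + |α|) / d`. Substituting `x = t^{1/d} y` and using the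
homogeneity of `f` and of `x^α` gives `∫_{f ≤ t} x^α = t^p M`. For `k ≥ 1`, the layer-cake
formula `f(x)^k = ∫₀¹ k t^{k-1} 𝟙[t < f(x)] dt` and Fubini turn the left-hand side into
`∫₀¹ k t^{k-1} (M - t^p M) dt = (1 - k / (k + p)) M = p / (k + p) · M`.
-/

open MeasureTheory Set Pointwise Module

def IsPosHomogeneous {E : Type*} [SMul ℝ E] (f : E → ℝ) (d : ℝ) : Prop :=
  ∀ c : ℝ, 0 < c → ∀ x, f (c • x) = c ^ d * f x

theorem intervalIntegral_indicator_Iio_eq_pow (m : ℕ) {a : ℝ} (h0 : 0 ≤ a) (h1 : a ≤ 1) :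
    ∫ t in (0 : ℝ)..1, (Iio a).indicator (fun t ↦ (m + 1 : ℝ) * t ^ m) t = a ^ (m + 1) := by
  have hIoo : Ioc 0 1 ∩ Iio a = Ioo 0 a := by
    ext t
    simp only [mem_inter_iff, mem_Ioc, mem_Iio, mem_Ioo]
    grind
  rw [intervalIntegral.integral_of_le zero_le_one, setIntegral_indicator measurableSet_Iio, hIoo,
    ← integral_Ioc_eq_integral_Ioo, ← intervalIntegral.integral_of_le h0,
    intervalIntegral.integral_const_mul, integral_pow]
  field_simp
  ring

theorem intervalIntegral_mul_one_sub_rpow (m : ℕ) {p : ℝ} (hp : 0 < m + 1 + p) :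
    ∫ t in (0 : ℝ)..1, (m + 1 : ℝ) * t ^ m * (1 - t ^ p) = p / (m + 1 + p) := by
  have hmp : -1 < (m : ℝ) + p := by linarith
  have hsplit : ∀ t ∈ uIoc (0 : ℝ) 1, (m + 1 : ℝ) * t ^ m * (1 - t ^ p)
      = (m + 1) * t ^ m - (m + 1) * t ^ ((m : ℝ) + p) := by
    intro t ht
    rw [uIoc_of_le zero_le_one] at ht
    rw [Real.rpow_add ht.1, Real.rpow_natCast]
    ring
  rw [intervalIntegral.integral_congr_ae (ae_of_all _ hsplit), intervalIntegral.integral_sub,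
    intervalIntegral.integral_const_mul, intervalIntegral.integral_const_mul, integral_pow,
    integral_rpow (Or.inl hmp)]
  · have hne : (m : ℝ) + p + 1 ≠ 0 := by linarith
    rw [one_pow, zero_pow m.succ_ne_zero, Real.one_rpow, Real.zero_rpow (by linarith)]
    field_simp
    ring
  · exact (continuous_const.mul (continuous_pow m)).intervalIntegrable _ _
  · exact (intervalIntegral.intervalIntegrable_rpow' hmp).const_mul _

theorem integrable_indicator_Iio_mul {α : Type*} [MeasurableSpace α] {μ : Measure α}
    {ν : Measure ℝ} {f g : α → ℝ} {φ : ℝ → ℝ} (hf : Measurable f) (hφ : Integrable φ ν)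
    (hg : Integrable g μ) :
    Integrable (fun p : ℝ × α ↦ (Iio (f p.2)).indicator φ p.1 * g p.2) (ν.prod μ) := by
  refine (hφ.norm.mul_prod hg.norm).mono' ?_ (ae_of_all _ fun p ↦ ?_)
  · have hset : MeasurableSet {p : ℝ × α | p.1 < f p.2} :=
      measurableSet_lt measurable_fst (hf.comp measurable_snd)
    exact ((hφ.1.comp_fst.indicator hset).mul hg.1.comp_snd :)
  · rw [norm_mul]
    exact mul_le_mul_of_nonneg_right (norm_indicator_le_norm_self _ _) (norm_nonneg _)

theorem IsPosHomogeneous.smul_setOf_le {E : Type*} [AddCommGroup E] [Module ℝ E] {f : E → ℝ}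
    {d : ℝ} (hf : IsPosHomogeneous f d) {c : ℝ} (hc : 0 < c) (s : ℝ) :
    c • {x | f x ≤ s} = {x | f x ≤ c ^ d * s} := by
  ext x
  rw [mem_smul_set_iff_inv_smul_mem₀ hc.ne', mem_ofPred_eq, mem_ofPred_eq, hf c⁻¹ (inv_pos.2 hc),
    Real.inv_rpow hc.le, inv_mul_le_iff₀ (Real.rpow_pos_of_pos hc d)]

section Haar

variable {E : Type*} [NormedAddCommGroup E] [NormedSpace ℝ E] [MeasurableSpace E] [BorelSpace E]
  [FiniteDimensional ℝ E] (μ : Measure E) [μ.IsAddHaarMeasure]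

theorem IsPosHomogeneous.setIntegral_setOf_le {f g : E → ℝ} {d r : ℝ} (hf : IsPosHomogeneous f d)
    (hg : IsPosHomogeneous g r) {c : ℝ} (hc : 0 < c) (s : ℝ) :
    ∫ x in {x | f x ≤ c ^ d * s}, g x ∂μ
      = c ^ (finrank ℝ E + r) * ∫ x in {x | f x ≤ s}, g x ∂μ := by
  have key := Measure.setIntegral_comp_smul_of_pos μ g {x | f x ≤ s} hc
  rw [hf.smul_setOf_le hc, smul_eq_mul] at key
  simp_rw [hg c hc, integral_const_mul] at key
  rw [Real.rpow_add hc, Real.rpow_natCast, mul_assoc, key, ← mul_assoc,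
    mul_inv_cancel₀ (pow_ne_zero _ hc.ne'), one_mul]

theorem IsPosHomogeneous.setIntegral_setOf_le_eq_rpow_mul {f g : E → ℝ} {d r : ℝ}
    (hf : IsPosHomogeneous f d) (hg : IsPosHomogeneous g r) (hd : d ≠ 0) {t : ℝ} (ht : 0 < t) :
    ∫ x in {x | f x ≤ t}, g x ∂μ
      = t ^ ((finrank ℝ E + r) / d) * ∫ x in {x | f x ≤ 1}, g x ∂μ := by
  have := hf.setIntegral_setOf_le μ hg (Real.rpow_pos_of_pos ht (1 / d)) 1
  rwa [← Real.rpow_mul ht.le, one_div_mul_cancel hd, Real.rpow_one, mul_one,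
    ← Real.rpow_mul ht.le, one_div_mul_eq_div] at this

theorem IsPosHomogeneous.setIntegral_indicator_Iio_mul {f g : E → ℝ} {d r : ℝ}
    (hf : IsPosHomogeneous f d) (hg : IsPosHomogeneous g r) (hd : d ≠ 0) (hf_meas : Measurable f)
    (hg_int : IntegrableOn g {x | f x ≤ 1} μ) (φ : ℝ → ℝ) {t : ℝ} (ht : t ∈ Ioc 0 1) :
    ∫ x in {x | f x ≤ 1}, (Iio (f x)).indicator φ t * g x ∂μ
      = φ t * (1 - t ^ ((finrank ℝ E + r) / d)) * ∫ x in {x | f x ≤ 1}, g x ∂μ := by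
  have hsplit : ∀ x, (Iio (f x)).indicator φ t * g x = φ t * {x | t < f x}.indicator g x := by
    intro x
    by_cases h : t < f x <;> simp [h]
  have hdiff : {x | f x ≤ 1} ∩ {x | t < f x} = {x | f x ≤ 1} \ {x | f x ≤ t} := by
    ext x
    simp [not_le]
  simp_rw [hsplit]
  rw [integral_const_mul, setIntegral_indicator (measurableSet_lt measurable_const hf_meas),
    hdiff, setIntegral_sdiff (measurableSet_le hf_meas measurable_const) hg_int
      fun x hx ↦ le_trans hx ht.2, hf.setIntegral_setOf_le_eq_rpow_mul μ hg hd ht.1]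
  ring

theorem IsPosHomogeneous.setIntegral_mul_pow_setOf_le_one {f g : E → ℝ} {d r : ℝ} (hd : 0 < d)
    (hr : 0 < finrank ℝ E + r) (hf_meas : Measurable f) (hf_nonneg : ∀ x, 0 ≤ f x)
    (hf : IsPosHomogeneous f d) (hg : IsPosHomogeneous g r)
    (hg_int : IntegrableOn g {x | f x ≤ 1} μ) (k : ℕ) :
    ∫ x in {x | f x ≤ 1}, g x * f x ^ k ∂μ =
      (finrank ℝ E + r) / (finrank ℝ E + k * d + r) * ∫ x in {x | f x ≤ 1}, g x ∂μ := by
  rcases k with _ | m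
  · simp [div_self hr.ne']
  set φ : ℝ → ℝ := fun t ↦ (m + 1 : ℝ) * t ^ m
  have hlayer : ∫ x in {x | f x ≤ 1}, g x * f x ^ (m + 1) ∂μ
      = ∫ x in {x | f x ≤ 1}, (∫ t in (0 : ℝ)..1, (Iio (f x)).indicator φ t * g x) ∂μ :=
    setIntegral_congr_fun (measurableSet_le hf_meas measurable_const) fun x hx ↦ by
      rw [intervalIntegral.integral_mul_const,
        intervalIntegral_indicator_Iio_eq_pow m (hf_nonneg x) hx, mul_comm]
  have hinner : ∀ t ∈ uIoc (0 : ℝ) 1, ∫ x in {x | f x ≤ 1}, (Iio (f x)).indicator φ t * g x ∂μ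
      = φ t * (1 - t ^ ((finrank ℝ E + r) / d)) * ∫ x in {x | f x ≤ 1}, g x ∂μ :=
    fun t ht ↦ hf.setIntegral_indicator_Iio_mul μ hg hd.ne' hf_meas hg_int φ
      (by rwa [uIoc_of_le zero_le_one] at ht)
  have hφ : IntegrableOn φ (uIoc 0 1) := (continuous_const.mul (continuous_pow m)).integrableOn_uIoc
  rw [hlayer, ← intervalIntegral_integral_swap (integrable_indicator_Iio_mul hf_meas hφ hg_int),
    intervalIntegral.integral_congr_ae (ae_of_all _ hinner), intervalIntegral.integral_mul_const,
    intervalIntegral_mul_one_sub_rpow m (by positivity)]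
  have hden : 0 < (finrank ℝ E : ℝ) + (m + 1) * d + r := by nlinarith
  congr 1
  push_cast
  rw [div_eq_div_iff (by positivity) hden.ne']
  field_simp
  ring

end Haar

theorem isPosHomogeneous_prod_pow {ι : Type*} [Fintype ι] (α : ι → ℕ) :
    IsPosHomogeneous (fun x : ι → ℝ ↦ ∏ i, x i ^ α i) (∑ i, (α i : ℝ)) := by
  intro c hc x
  simp only [Pi.smul_apply, smul_eq_mul, mul_pow, Finset.prod_mul_distrib,
    Finset.prod_pow_eq_pow_sum]
  rw [← Nat.cast_sum, Real.rpow_natCast]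

/-- Main integral identity: for `f` measurable, nonnegative, positively homogeneous of
degree `d > 0` with bounded sublevel set `G = {f ≤ 1}`, for all `k` and multi-indices `α`,
`∫_G x^α f(x)^k dx = ((n+|α|)/(n+kd+|α|)) ∫_G x^α dx`. -/
theorem moment_identity (n : ℕ) (hn : 0 < n) (d : ℝ) (hd : 0 < d)
    (f : (Fin n → ℝ) → ℝ) (hmeas : Measurable f) (hpos : ∀ x, 0 ≤ f x)
    (hhom : ∀ c : ℝ, 0 < c → ∀ x, f (c • x) = c ^ d * f x)
    (hbdd : Bornology.IsBounded {x : Fin n → ℝ | f x ≤ 1}) :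
    ∀ (k : ℕ) (α : Fin n → ℕ),
      ∫ x in {x : Fin n → ℝ | f x ≤ 1}, (∏ i, x i ^ α i) * f x ^ k =
        (((n : ℝ) + ∑ i, (α i : ℝ)) / ((n : ℝ) + k * d + ∑ i, (α i : ℝ))) *
          ∫ x in {x : Fin n → ℝ | f x ≤ 1}, ∏ i, x i ^ α i := by
  intro k α
  have hint : IntegrableOn (fun x : Fin n → ℝ ↦ ∏ i, x i ^ α i) {x | f x ≤ 1} :=
    ((continuous_finsetProd _ fun i _ ↦ (continuous_apply i).pow _).locallyIntegrable
      |>.integrableOn_isCompact hbdd.isCompact_closure).mono_set subset_closure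
  have hr : 0 < (finrank ℝ (Fin n → ℝ) : ℝ) + ∑ i, (α i : ℝ) := by
    rw [finrank_fin_fun]
    positivity
  simpa only [finrank_fin_fun] using IsPosHomogeneous.setIntegral_mul_pow_setOf_le_one volume hd
    hr hmeas hpos hhom (isPosHomogeneous_prod_pow α) hint k
end

section
/- Let f : ℝⁿ → ℝ be measurable, nonnegative, and positively homogeneous of degree d > 0, with bounded sublevel set G = {x : f(x) ≤ 1}. Then ∫_G f(x) dx = (n/(n+d)) · vol(G), where vol denotes Lebesgue measure. -/
/-!
Homogeneity gives `{f ≤ t} = t ^ (1/d) • G`, so `vol {f ≤ t} = t ^ (n/d) vol G` for `t > 0`.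
By the layer cake formula, `∫_G f = ∫₀¹ vol (G \ {f ≤ t}) dt = vol G · ∫₀¹ (1 - t ^ (n/d)) dt`,
and the last integral is `(n/d) / (n/d + 1) = n / (n + d)`.
-/

open MeasureTheory Pointwise Module Set

section Homogeneous

variable {E : Type*} [AddCommGroup E] [Module ℝ E] {f : E → ℝ} {d : ℝ}

theorem setOf_le_eq_rpow_smul_setOf_le_one (hd : 0 < d)
    (hhom : ∀ c : ℝ, 0 < c → ∀ x, f (c • x) = c ^ d * f x) {t : ℝ} (ht : 0 < t) :
    {x | f x ≤ t} = t ^ d⁻¹ • {x | f x ≤ 1} := by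
  have hc : 0 < t ^ d⁻¹ := Real.rpow_pos_of_pos ht _
  have hcd : (t ^ d⁻¹)⁻¹ ^ d = t⁻¹ := by
    rw [Real.inv_rpow hc.le, ← Real.rpow_mul ht.le, inv_mul_cancel₀ hd.ne', Real.rpow_one]
  ext x
  rw [mem_smul_set_iff_inv_smul_mem₀ hc.ne', mem_ofPred_eq, mem_ofPred_eq,
    hhom _ (inv_pos.mpr hc), hcd, inv_mul_le_iff₀ ht, mul_one]

end Homogeneous

theorem integral_one_sub_rpow {p : ℝ} (hp : 0 ≤ p) :
    ∫ t in (0 : ℝ)..1, (1 - t ^ p) = p / (p + 1) := by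
  rw [intervalIntegral.integral_sub intervalIntegrable_const
      (intervalIntegral.intervalIntegrable_rpow' (by linarith)),
    integral_rpow (Or.inl (by linarith)), Real.one_rpow, Real.zero_rpow (by linarith),
    intervalIntegral.integral_const]
  field_simp
  ring

theorem integrableOn_setOf_le_one {α : Type*} [MeasurableSpace α] {μ : Measure α} {f : α → ℝ}
    (hmeas : Measurable f) (hpos : ∀ x, 0 ≤ f x) (hfin : μ {x | f x ≤ 1} ≠ ⊤) :
    IntegrableOn f {x | f x ≤ 1} μ := by
  have : IsFiniteMeasure (μ.restrict {x | f x ≤ 1}) := isFiniteMeasure_restrict.mpr hfin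
  refine (integrable_const 1).mono' hmeas.aestronglyMeasurable ?_
  filter_upwards [ae_restrict_mem (hmeas measurableSet_Iic)] with x hx
  rwa [Real.norm_of_nonneg (hpos x)]

section AddHaar

variable {E : Type*} [NormedAddCommGroup E] [NormedSpace ℝ E] [MeasurableSpace E] [BorelSpace E]
  [FiniteDimensional ℝ E] (μ : Measure E) [μ.IsAddHaarMeasure] {f : E → ℝ} {d : ℝ}

theorem measureReal_setOf_le_of_homogeneous (hd : 0 < d)
    (hhom : ∀ c : ℝ, 0 < c → ∀ x, f (c • x) = c ^ d * f x) {t : ℝ} (ht : 0 < t) :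
    μ.real {x | f x ≤ t} = t ^ (finrank ℝ E / d) * μ.real {x | f x ≤ 1} := by
  rw [setOf_le_eq_rpow_smul_setOf_le_one hd hhom ht, measureReal_def,
    Measure.addHaar_smul_of_nonneg μ (Real.rpow_nonneg ht.le _), ENNReal.toReal_mul,
    ENNReal.toReal_ofReal (by positivity), ← Real.rpow_natCast, ← Real.rpow_mul ht.le,
    inv_mul_eq_div, measureReal_def]

theorem measureReal_restrict_setOf_lt_of_homogeneous (hmeas : Measurable f) (hd : 0 < d)
    (hhom : ∀ c : ℝ, 0 < c → ∀ x, f (c • x) = c ^ d * f x) (hfin : μ {x | f x ≤ 1} ≠ ⊤)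
    {t : ℝ} (ht : 0 < t) :
    (μ.restrict {x | f x ≤ 1}).real {x | t < f x} =
      (Ioc 0 1).indicator (fun s ↦ (1 - s ^ (finrank ℝ E / d)) * μ.real {x | f x ≤ 1}) t := by
  rw [measureReal_restrict_apply (measurableSet_lt measurable_const hmeas)]
  by_cases h1 : t ≤ 1
  · have hsub : {x | f x ≤ t} ⊆ {x | f x ≤ 1} := fun x hx ↦ le_trans hx h1
    have hdiff : {x | t < f x} ∩ {x | f x ≤ 1} = {x | f x ≤ 1} \ {x | f x ≤ t} := by
      ext x
      simp only [mem_inter_iff, mem_ofPred_eq, mem_sdiff, not_le]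
      tauto
    rw [hdiff, measureReal_sdiff hsub (hmeas measurableSet_Iic),
      indicator_of_mem (mem_Ioc.mpr ⟨ht, h1⟩), measureReal_setOf_le_of_homogeneous μ hd hhom ht]
    ring
  · have hempty : {x | t < f x} ∩ {x | f x ≤ 1} = ∅ := by
      ext x
      simp only [mem_inter_iff, mem_ofPred_eq, mem_empty_iff_false, iff_false, not_and, not_le]
      intro hx
      linarith
    rw [hempty, indicator_of_notMem (fun h ↦ h1 h.2), measureReal_empty]

theorem setIntegral_setOf_le_one_of_homogeneous (hmeas : Measurable f) (hpos : ∀ x, 0 ≤ f x)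
    (hd : 0 < d) (hhom : ∀ c : ℝ, 0 < c → ∀ x, f (c • x) = c ^ d * f x)
    (hfin : μ {x | f x ≤ 1} ≠ ⊤) :
    ∫ x in {x | f x ≤ 1}, f x ∂μ = finrank ℝ E / (finrank ℝ E + d) * μ.real {x | f x ≤ 1} := by
  rw [(integrableOn_setOf_le_one hmeas hpos hfin).integral_eq_integral_meas_lt
      (Filter.Eventually.of_forall hpos),
    setIntegral_congr_fun measurableSet_Ioi
      (fun t ht ↦ measureReal_restrict_setOf_lt_of_homogeneous μ hmeas hd hhom hfin ht),
    integral_indicator measurableSet_Ioc, Measure.restrict_restrict measurableSet_Ioc,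
    inter_eq_left.mpr Ioc_subset_Ioi_self, ← intervalIntegral.integral_of_le zero_le_one,
    intervalIntegral.integral_mul_const, integral_one_sub_rpow (by positivity)]
  congr 1
  field_simp

end AddHaar

theorem integral_f_eq_general (n : ℕ) (d : ℝ) (hd : 0 < d)
    (f : (Fin n → ℝ) → ℝ) (hmeas : Measurable f) (hpos : ∀ x, 0 ≤ f x)
    (hhom : ∀ c : ℝ, 0 < c → ∀ x, f (c • x) = c ^ d * f x)
    (hbdd : Bornology.IsBounded {x : Fin n → ℝ | f x ≤ 1}) :
    ∫ x in {x : Fin n → ℝ | f x ≤ 1}, f x =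
      ((n : ℝ) / ((n : ℝ) + d)) * (volume {x : Fin n → ℝ | f x ≤ 1}).toReal := by
  have h := setIntegral_setOf_le_one_of_homogeneous volume hmeas hpos hd hhom
    hbdd.measure_lt_top.ne
  rwa [finrank_fin_fun, measureReal_def] at h

/-- For `f` measurable, nonnegative, positively homogeneous of degree `d > 0` with
bounded sublevel set `G = {f ≤ 1}`, one has `∫_G f = (n/(n+d)) · vol(G)`. -/
theorem integral_f_eq (n : ℕ) (hn : 0 < n) (d : ℝ) (hd : 0 < d)
    (f : (Fin n → ℝ) → ℝ) (hmeas : Measurable f) (hpos : ∀ x, 0 ≤ f x)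
    (hhom : ∀ c : ℝ, 0 < c → ∀ x, f (c • x) = c ^ d * f x)
    (hbdd : Bornology.IsBounded {x : Fin n → ℝ | f x ≤ 1}) :
    ∫ x in {x : Fin n → ℝ | f x ≤ 1}, f x =
      ((n : ℝ) / ((n : ℝ) + d)) * (volume {x : Fin n → ℝ | f x ≤ 1}).toReal :=
  integral_f_eq_general n d hd f hmeas hpos hhom hbdd
end

section
/- Let f : ℝⁿ → ℝ be measurable, nonnegative, and positively homogeneous of degree d > 0, with bounded sublevel set G = {x : f(x) ≤ 1}. Then for every k ∈ ℕ, ∫_G f(x)^k dx = (n/(n + kd)) · vol(G). -/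
/-!
Homogeneity makes every sublevel set a dilate of `G = {f ≤ 1}`: `{f ≤ s} = s^(1/d) • G`, so
`vol {f ≤ s} = s^(n/d) vol G`. Hence, on `G`, the function `f^k` has distribution function
`t ↦ t^q vol G` on `(0, 1]` with `q = n/(kd)`, and the layer cake formula gives
`∫_G f^k = vol G · ∫₀¹ (1 - t^q) dt = q/(q+1) · vol G = n/(n + kd) · vol G`.
-/

open MeasureTheory Set Module
open scoped Pointwise

section Homogeneous

variable {E : Type*} {f : E → ℝ} {d : ℝ}

theorem setOf_le_eq_smul_of_homogeneous [AddCommGroup E] [Module ℝ E] (hd : d ≠ 0)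
    (hhom : ∀ c : ℝ, 0 < c → ∀ x, f (c • x) = c ^ d * f x) {s : ℝ} (hs : 0 < s) :
    {x | f x ≤ s} = (s ^ d⁻¹) • {x | f x ≤ 1} := by
  have hc : 0 < s ^ d⁻¹ := Real.rpow_pos_of_pos hs _
  ext x
  rw [mem_smul_set_iff_inv_smul_mem₀ hc.ne', mem_ofPred_eq, mem_ofPred_eq,
    hhom _ (inv_pos.mpr hc), Real.inv_rpow hc.le, Real.rpow_inv_rpow hs.le hd,
    inv_mul_le_iff₀ hs, mul_one]

variable [NormedAddCommGroup E] [NormedSpace ℝ E] [MeasurableSpace E] [BorelSpace E]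
  [FiniteDimensional ℝ E] (μ : Measure E) [μ.IsAddHaarMeasure]

theorem addHaar_setOf_le_of_homogeneous (hd : d ≠ 0)
    (hhom : ∀ c : ℝ, 0 < c → ∀ x, f (c • x) = c ^ d * f x) {s : ℝ} (hs : 0 < s) :
    μ {x | f x ≤ s} = ENNReal.ofReal (s ^ (finrank ℝ E / d)) * μ {x | f x ≤ 1} := by
  rw [setOf_le_eq_smul_of_homogeneous hd hhom hs, Measure.addHaar_smul,
    abs_of_nonneg (by positivity), ← Real.rpow_natCast, ← Real.rpow_mul hs.le,
    inv_mul_eq_div]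

theorem measureReal_restrict_setOf_pow_le_of_homogeneous (hd : d ≠ 0)
    (hhom : ∀ c : ℝ, 0 < c → ∀ x, f (c • x) = c ^ d * f x) (hpos : ∀ x, 0 ≤ f x) {k : ℕ}
    (hk : k ≠ 0) {t : ℝ} (ht : t ∈ Ioc (0 : ℝ) 1) :
    (μ.restrict {x | f x ≤ 1}).real {x | f x ^ k ≤ t} =
      t ^ (finrank ℝ E / (k * d)) * μ.real {x | f x ≤ 1} := by
  have hk' : (0 : ℝ) < k := by positivity
  have hroot : {x | f x ^ k ≤ t} = {x | f x ≤ t ^ (k : ℝ)⁻¹} := by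
    ext x
    rw [mem_ofPred_eq, mem_ofPred_eq, Real.le_rpow_inv_iff_of_pos (hpos x) ht.1.le hk',
      Real.rpow_natCast]
  have hsub : {x | f x ^ k ≤ t} ⊆ {x | f x ≤ 1} := fun x hx =>
    (pow_le_one_iff_of_nonneg (hpos x) hk).mp (le_trans hx ht.2)
  rw [measureReal_def, Measure.restrict_eq_self μ hsub, hroot,
    addHaar_setOf_le_of_homogeneous μ hd hhom (Real.rpow_pos_of_pos ht.1 _), ENNReal.toReal_mul,
    ← Real.rpow_mul ht.1.le, ENNReal.toReal_ofReal (Real.rpow_nonneg ht.1.le _), measureReal_def]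
  congr 2
  field_simp

end Homogeneous

theorem integral_eq_of_measureReal_le_eq_rpow {α : Type*} [MeasurableSpace α] {μ : Measure α}
    [IsFiniteMeasure μ] {g : α → ℝ} (hg : Measurable g) (hg0 : 0 ≤ᵐ[μ] g) (hg1 : g ≤ᵐ[μ] 1)
    {q : ℝ} (hq : 0 ≤ q)
    (hdist : ∀ t ∈ Ioc (0 : ℝ) 1, μ.real {a | g a ≤ t} = t ^ q * μ.real univ) :
    ∫ a, g a ∂μ = q / (q + 1) * μ.real univ := by
  have hint : Integrable g μ := .of_bound hg.aestronglyMeasurable 1 <| by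
    filter_upwards [hg0, hg1] with a h0 h1
    rwa [Real.norm_of_nonneg h0]
  have htail : ∀ t ∈ Ioc (0 : ℝ) 1, μ.real {a | t < g a} = (1 - t ^ q) * μ.real univ := by
    intro t ht
    have hcompl : {a | t < g a} = {a | g a ≤ t}ᶜ := by ext; simp
    rw [hcompl, measureReal_compl (measurableSet_le hg measurable_const), hdist t ht]
    ring
  have hvanish : ∀ t, 1 < t → μ.real {a | t < g a} = 0 := by
    intro t ht
    refine (measureReal_eq_zero_iff).mpr (measure_eq_zero_iff_ae_notMem.mpr ?_)
    filter_upwards [hg1] with a ha using not_lt.mpr (ha.trans ht.le)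
  calc ∫ a, g a ∂μ = ∫ t in Ioi 0, μ.real {a | t < g a} := hint.integral_eq_integral_meas_lt hg0
    _ = ∫ t in Ioc 0 1, μ.real {a | t < g a} :=
      setIntegral_eq_of_subset_of_ae_sdiff_eq_zero nullMeasurableSet_Ioi Ioc_subset_Ioi_self
        (ae_of_all _ fun t ht => hvanish t (by simp_all))
    _ = ∫ t in (0 : ℝ)..1, (1 - t ^ q) * μ.real univ := by
      rw [intervalIntegral.integral_of_le zero_le_one]
      exact setIntegral_congr_fun measurableSet_Ioc htail
    _ = q / (q + 1) * μ.real univ := by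
      rw [intervalIntegral.integral_mul_const,
        intervalIntegral.integral_sub intervalIntegrable_const
          (intervalIntegral.intervalIntegrable_rpow' (by linarith)),
        integral_rpow (Or.inl (by linarith))]
      have : q + 1 ≠ 0 := by positivity
      simp only [intervalIntegral.integral_const, Real.one_rpow, Real.zero_rpow this]
      field_simp
      ring

/-- For `f` measurable, nonnegative, positively homogeneous of degree `d > 0` with
bounded sublevel set `G = {f ≤ 1}`, for every `k : ℕ`,
`∫_G f^k = (n/(n+kd)) · vol(G)`. -/
theorem integral_pow_eq (n : ℕ) (hn : 0 < n) (d : ℝ) (hd : 0 < d)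
    (f : (Fin n → ℝ) → ℝ) (hmeas : Measurable f) (hpos : ∀ x, 0 ≤ f x)
    (hhom : ∀ c : ℝ, 0 < c → ∀ x, f (c • x) = c ^ d * f x)
    (hbdd : Bornology.IsBounded {x : Fin n → ℝ | f x ≤ 1}) :
    ∀ k : ℕ,
      ∫ x in {x : Fin n → ℝ | f x ≤ 1}, f x ^ k =
        ((n : ℝ) / ((n : ℝ) + k * d)) * (volume {x : Fin n → ℝ | f x ≤ 1}).toReal := by
  intro k
  set G := {x : Fin n → ℝ | f x ≤ 1}
  rcases eq_or_ne k 0 with rfl | hk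
  · have : (n : ℝ) ≠ 0 := by positivity
    simp [this, measureReal_def]
  have : IsFiniteMeasure (volume.restrict G) :=
    isFiniteMeasure_restrict.mpr hbdd.measure_lt_top.ne
  have hG : MeasurableSet G := hmeas measurableSet_Iic
  have hG1 : (fun x => f x ^ k) ≤ᵐ[volume.restrict G] 1 :=
    (ae_restrict_iff' hG).mpr (ae_of_all _ fun x hx => pow_le_one₀ (hpos x) hx)
  have hdist : ∀ t ∈ Ioc (0 : ℝ) 1, (volume.restrict G).real {x | f x ^ k ≤ t} =
      t ^ ((n : ℝ) / (k * d)) * (volume.restrict G).real univ := fun t ht => by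
    simpa using measureReal_restrict_setOf_pow_le_of_homogeneous volume hd.ne' hhom hpos hk ht
  rw [integral_eq_of_measureReal_le_eq_rpow (hmeas.pow_const k)
    (ae_of_all _ fun x => pow_nonneg (hpos x) k) hG1 (by positivity) hdist,
    measureReal_restrict_apply_univ, measureReal_def]
  congr 1
  field_simp
end

section
/- Let f : ℝⁿ → ℝ be measurable, nonnegative, positively homogeneous of degree d > 0, with bounded sublevel set G = {f ≤ 1}. Then for every multi-index α, ∫_G x^α f(x) dx = ((n+|α|)/(n+d+|α|)) ∫_G x^α dx. -/
/-!
Writing `f = ∫₀¹ 𝟙{t < f} dt` on `G = {f ≤ 1}` and swapping the integrals turns `∫_G x^α f` into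
`∫₀¹ (F 1 - F t) dt`, where `F t = ∫_{f ≤ t} x^α`. Since `{f ≤ t} = t^(1/d) • G` and `x^α` is
homogeneous of degree `|α|`, the substitution `x ↦ t^(1/d) x` gives `F t = t^r F 1` with
`r = (n + |α|)/d`, and `∫₀¹ (1 - t^r) dt = r/(r + 1) = (n + |α|)/(n + d + |α|)`.
-/

open MeasureTheory Set Function
open scoped Pointwise

lemma integral_Ioc_zero_one_indicator_Iio {a : ℝ} (ha : a ∈ Icc (0 : ℝ) 1) (b : ℝ) :
    ∫ t in Ioc (0 : ℝ) 1, (Iio a).indicator (fun _ ↦ b) t = b * a := by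
  have hIoo : Iio a ∩ Ioc (0 : ℝ) 1 = Ioo 0 a := by
    ext t
    simp only [mem_inter_iff, mem_Iio, mem_Ioc, mem_Ioo]
    constructor
    · rintro ⟨hta, ht0, -⟩; exact ⟨ht0, hta⟩
    · rintro ⟨ht0, hta⟩; exact ⟨hta, ht0, hta.le.trans ha.2⟩
  rw [integral_indicator measurableSet_Iio, setIntegral_const, Measure.real,
    Measure.restrict_apply measurableSet_Iio, hIoo, Real.volume_Ioo,
    ENNReal.toReal_ofReal (sub_nonneg.2 ha.1), sub_zero, smul_eq_mul, mul_comm]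

section LayerCake

variable {X : Type*} [MeasurableSpace X] {μ : Measure X} [SFinite μ] {f g : X → ℝ}

theorem integral_mul_eq_integral_Ioc_setIntegral_lt (hg : Integrable g μ) (hf : Measurable f)
    (hf01 : ∀ᵐ x ∂μ, f x ∈ Icc (0 : ℝ) 1) :
    ∫ x, g x * f x ∂μ = ∫ t in Ioc (0 : ℝ) 1, ∫ x in {x | t < f x}, g x ∂μ := by
  have hint : Integrable (uncurry fun x t ↦ {x | t < f x}.indicator g x)
      (μ.prod (volume.restrict (Ioc (0 : ℝ) 1))) :=
    (hg.comp_fst _).indicator (measurableSet_lt measurable_snd (hf.comp measurable_fst))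
  calc ∫ x, g x * f x ∂μ
      = ∫ x, (∫ t in Ioc (0 : ℝ) 1, {x | t < f x}.indicator g x) ∂μ := by
        refine integral_congr_ae ?_
        filter_upwards [hf01] with x hx
        rw [← integral_Ioc_zero_one_indicator_Iio hx]
        congr with t
    _ = ∫ t in Ioc (0 : ℝ) 1, ∫ x, {x | t < f x}.indicator g x ∂μ := integral_integral_swap hint
    _ = ∫ t in Ioc (0 : ℝ) 1, ∫ x in {x | t < f x}, g x ∂μ := by
        congr with t
        exact integral_indicator (measurableSet_lt measurable_const hf)

theorem setIntegral_sublevel_mul_eq_integral_Ioc_sub (hg : IntegrableOn g {x | f x ≤ 1} μ)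
    (hf : Measurable f) (hf0 : ∀ x, 0 ≤ f x) :
    ∫ x in {x | f x ≤ 1}, g x * f x ∂μ =
      ∫ t in Ioc (0 : ℝ) 1, (∫ x in {x | f x ≤ 1}, g x ∂μ - ∫ x in {x | f x ≤ t}, g x ∂μ) := by
  have hG : MeasurableSet {x | f x ≤ 1} := hf measurableSet_Iic
  rw [integral_mul_eq_integral_Ioc_setIntegral_lt hg hf
    ((ae_restrict_iff' hG).2 (ae_of_all _ fun x hx ↦ ⟨hf0 x, hx⟩))]
  refine setIntegral_congr_fun measurableSet_Ioc fun t ht ↦ ?_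
  have hsdiff : {x | t < f x} ∩ {x | f x ≤ 1} = {x | f x ≤ 1} \ {x | f x ≤ t} := by
    ext x
    simp only [mem_inter_iff, mem_sdiff, mem_ofPred_eq, not_le]
    tauto
  have hsub : MeasurableSet {x | f x ≤ t} := hf measurableSet_Iic
  rw [Measure.restrict_restrict (measurableSet_lt measurable_const hf), hsdiff,
    setIntegral_sdiff hsub hg fun x hx ↦ le_trans hx ht.2]

end LayerCake

def PosHomogeneous {E : Type*} [SMul ℝ E] (f : E → ℝ) (d : ℝ) : Prop :=
  ∀ c : ℝ, 0 < c → ∀ x, f (c • x) = c ^ d * f x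

namespace PosHomogeneous

variable {E : Type*} {f g : E → ℝ} {d s t : ℝ}

lemma sublevel_eq_smul [MulAction ℝ E] (hf : PosHomogeneous f d) (hd : 0 < d) (ht : 0 < t) :
    {x | f x ≤ t} = t ^ (1 / d) • {x | f x ≤ 1} := by
  have hc : 0 < t ^ (1 / d) := Real.rpow_pos_of_pos ht _
  ext x
  rw [mem_smul_set_iff_inv_smul_mem₀ hc.ne', mem_ofPred_eq, mem_ofPred_eq, hf _ (inv_pos.2 hc),
    Real.inv_rpow hc.le, ← Real.rpow_mul ht.le, one_div_mul_cancel hd.ne', Real.rpow_one,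
    inv_mul_le_iff₀ ht, mul_one]

theorem setIntegral_sublevel [NormedAddCommGroup E] [NormedSpace ℝ E] [MeasurableSpace E]
    [BorelSpace E] [FiniteDimensional ℝ E] (μ : Measure E) [μ.IsAddHaarMeasure]
    (hg : PosHomogeneous g s) (hf : PosHomogeneous f d) (hd : 0 < d) (ht : 0 < t) :
    ∫ x in {x | f x ≤ t}, g x ∂μ =
      t ^ ((Module.finrank ℝ E + s) / d) * ∫ x in {x | f x ≤ 1}, g x ∂μ := by
  set c := t ^ (1 / d)
  have hc : 0 < c := Real.rpow_pos_of_pos ht _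
  have hscale := Measure.setIntegral_comp_smul_of_pos μ g {x | f x ≤ 1} hc
  simp only [hg c hc, integral_const_mul, smul_eq_mul] at hscale
  rw [← hf.sublevel_eq_smul hd ht, eq_inv_mul_iff_mul_eq₀ (by positivity)] at hscale
  rw [← hscale, ← mul_assoc, ← Real.rpow_natCast, ← Real.rpow_add hc, ← Real.rpow_mul ht.le,
    one_div_mul_eq_div]

end PosHomogeneous

lemma posHomogeneous_monomial {ι : Type*} [Fintype ι] (α : ι → ℕ) :
    PosHomogeneous (fun x : ι → ℝ ↦ ∏ i, x i ^ α i) (∑ i, (α i : ℝ)) := by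
  intro c hc x
  simp only [Pi.smul_apply, smul_eq_mul, mul_pow, Finset.prod_mul_distrib,
    Real.rpow_sum_of_pos hc, Real.rpow_natCast]

lemma integral_Ioc_zero_one_one_sub_rpow {r : ℝ} (hr : -1 < r) :
    ∫ t in Ioc (0 : ℝ) 1, (1 - t ^ r) = r / (r + 1) := by
  rw [← intervalIntegral.integral_of_le zero_le_one, intervalIntegral.integral_sub
    intervalIntegrable_const (intervalIntegral.intervalIntegrable_rpow' hr),
    integral_rpow (Or.inl hr), Real.one_rpow, Real.zero_rpow (by linarith),
    intervalIntegral.integral_const, smul_eq_mul]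
  have : r + 1 ≠ 0 := by linarith
  field_simp
  ring

theorem moment_identity_k_one_general (n : ℕ) (d : ℝ) (hd : 0 < d)
    (f : (Fin n → ℝ) → ℝ) (hmeas : Measurable f) (hpos : ∀ x, 0 ≤ f x)
    (hhom : ∀ c : ℝ, 0 < c → ∀ x, f (c • x) = c ^ d * f x)
    (hbdd : Bornology.IsBounded {x : Fin n → ℝ | f x ≤ 1}) :
    ∀ α : Fin n → ℕ,
      ∫ x in {x : Fin n → ℝ | f x ≤ 1}, (∏ i, x i ^ α i) * f x =
        (((n : ℝ) + ∑ i, (α i : ℝ)) / ((n : ℝ) + d + ∑ i, (α i : ℝ))) *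
          ∫ x in {x : Fin n → ℝ | f x ≤ 1}, ∏ i, x i ^ α i := by
  intro α
  set P : (Fin n → ℝ) → ℝ := fun x ↦ ∏ i, x i ^ α i
  set A := ∫ x in {x | f x ≤ 1}, P x
  set r := ((n : ℝ) + ∑ i, (α i : ℝ)) / d
  have hr : 0 ≤ r := by positivity
  have hPint : IntegrableOn P {x | f x ≤ 1} :=
    ((by fun_prop : Continuous P).continuousOn.integrableOn_compact
      hbdd.isCompact_closure).mono_set subset_closure
  calc ∫ x in {x | f x ≤ 1}, P x * f x
      = ∫ t in Ioc (0 : ℝ) 1, (A - ∫ x in {x | f x ≤ t}, P x) :=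
        setIntegral_sublevel_mul_eq_integral_Ioc_sub hPint hmeas hpos
    _ = ∫ t in Ioc (0 : ℝ) 1, (1 - t ^ r) * A := by
        refine setIntegral_congr_fun measurableSet_Ioc fun t ht ↦ ?_
        rw [(posHomogeneous_monomial α).setIntegral_sublevel volume hhom hd ht.1,
          Module.finrank_fin_fun]
        ring
    _ = r / (r + 1) * A := by
        rw [integral_mul_const, integral_Ioc_zero_one_one_sub_rpow (by linarith)]
    _ = _ := by
        rw [div_add_one hd.ne', div_div_div_cancel_right₀ hd.ne', add_right_comm]

/-- Case `k = 1` of the main identity: for `f` measurable, nonnegative, positively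
homogeneous of degree `d > 0` with bounded sublevel set `G = {f ≤ 1}`,
`∫_G x^α f(x) dx = ((n+|α|)/(n+d+|α|)) ∫_G x^α dx` for every multi-index `α`. -/
theorem moment_identity_k_one (n : ℕ) (hn : 0 < n) (d : ℝ) (hd : 0 < d)
    (f : (Fin n → ℝ) → ℝ) (hmeas : Measurable f) (hpos : ∀ x, 0 ≤ f x)
    (hhom : ∀ c : ℝ, 0 < c → ∀ x, f (c • x) = c ^ d * f x)
    (hbdd : Bornology.IsBounded {x : Fin n → ℝ | f x ≤ 1}) :
    ∀ α : Fin n → ℕ,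
      ∫ x in {x : Fin n → ℝ | f x ≤ 1}, (∏ i, x i ^ α i) * f x =
        (((n : ℝ) + ∑ i, (α i : ℝ)) / ((n : ℝ) + d + ∑ i, (α i : ℝ))) *
          ∫ x in {x : Fin n → ℝ | f x ≤ 1}, ∏ i, x i ^ α i :=
  moment_identity_k_one_general n d hd f hmeas hpos hhom hbdd
end

section
/- Let g(x₁,x₂) = g₂₀ x₁² + g₁₁ x₁x₂ + g₀₂ x₂² be a positive definite quadratic form on ℝ² with sublevel set G = {x : g(x) ≤ 1} (an ellipse), and let λ_{ij} = ∫_G x₁^i x₂^j dx. Then the coefficient vector (g₂₀, g₁₁, g₀₂) satisfies the linear system with matrix rows (λ₄₀, λ₃₁, λ₂₂), (λ₃₁, λ₂₂, λ₁₃), (λ₂₂, λ₁₃, λ₀₄) and right-hand side (1/2)(λ₂₀, λ₁₁, λ₀₂), and this system has a unique solution. -/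
/-!
If `g` is positive definite and 2-homogeneous and `h` is `k`-homogeneous on `ℝⁿ`, then
`{g ≤ t} = √t • {g ≤ 1}`, so `∫_{g ≤ t} h = t ^ ((n + k) / 2) ∫_{g ≤ 1} h`. Fubini turns
`∫_{g ≤ 1} (1 - g) h` into `∫₀¹ ∫_{g ≤ t} h dt = 2 / (n + k + 2) ∫_{g ≤ 1} h`, which for the
quadratic monomials in the plane (`n = k = 2`) is the linear system. Its matrix is the Gram matrix
of `x₁², x₁x₂, x₂²` in `L²({g ≤ 1})`: a kernel vector is a quadratic form vanishing a.e. on the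
ellipse, hence near `0` by continuity, hence everywhere by homogeneity.
-/

open MeasureTheory Set Filter Topology Module Pointwise

theorem isCompact_sublevel_of_homogeneous {E : Type*} [NormedAddCommGroup E] [NormedSpace ℝ E]
    [FiniteDimensional ℝ E] {g : E → ℝ} (hgc : Continuous g)
    (hgs : ∀ (c : ℝ) x, g (c • x) = c ^ 2 * g x) (hpos : ∀ x, x ≠ 0 → 0 < g x) (a : ℝ) :
    IsCompact {x | g x ≤ a} := by
  rcases subsingleton_or_nontrivial E with _ | _
  · exact Set.subsingleton_of_subsingleton.isCompact
  obtain ⟨z, hz, hzmin⟩ := (isCompact_sphere (0 : E) 1).exists_isMinOn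
    (NormedSpace.sphere_nonempty.2 zero_le_one) hgc.continuousOn
  have hm : 0 < g z := hpos z (ne_zero_of_mem_unit_sphere ⟨z, hz⟩)
  have hbound : ∀ x, g z * ‖x‖ ^ 2 ≤ g x := by
    intro x
    rcases eq_or_ne x 0 with rfl | hx
    · simp [show g 0 = 0 by simpa using hgs 0 0]
    · have hx' : ‖x‖⁻¹ • x ∈ Metric.sphere (0 : E) 1 := by simp [norm_smul, hx]
      calc g z * ‖x‖ ^ 2 ≤ g (‖x‖⁻¹ • x) * ‖x‖ ^ 2 := by gcongr; exact hzmin hx'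
        _ = g x := by rw [hgs]; field_simp
  refine Metric.isCompact_of_isClosed_isBounded (isClosed_le hgc continuous_const)
    ((Metric.isBounded_closedBall (x := 0) (r := a / g z + 1)).subset fun x hx => ?_)
  have : ‖x‖ ^ 2 ≤ a / g z := by
    rw [le_div_iff₀ hm]; linarith [hbound x, show g x ≤ a from hx]
  rw [mem_closedBall_zero_iff]
  nlinarith [sq_nonneg (‖x‖ - 1)]

theorem setIntegral_one_sub_mul_eq_integral_setIntegral_sublevel {α : Type*}
    [MeasurableSpace α] {μ : Measure α} [SFinite μ] {g h : α → ℝ} (hg : Measurable g)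
    (hg0 : ∀ x, 0 ≤ g x) (hh : IntegrableOn h {x | g x ≤ 1} μ) :
    ∫ x in {x | g x ≤ 1}, (1 - g x) * h x ∂μ =
      ∫ t in Icc (0 : ℝ) 1, ∫ x in {x | g x ≤ t}, h x ∂μ := by
  set F : α × ℝ → ℝ := {p | g p.1 ≤ p.2}.indicator (fun p => h p.1)
  have hF : Integrable F ((μ.restrict {x | g x ≤ 1}).prod (volume.restrict (Icc (0 : ℝ) 1))) :=
    (hh.comp_fst _).indicator (measurableSet_le (hg.comp measurable_fst) measurable_snd)
  have inner_t : ∀ x ∈ {x | g x ≤ 1}, ∫ t in Icc (0 : ℝ) 1, F (x, t) = (1 - g x) * h x := by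
    intro x hx
    have : (fun t => F (x, t)) = (Ici (g x)).indicator (fun _ => h x) := by
      ext t; simp [F, indicator_apply]
    have hinter : Ici (g x) ∩ Icc 0 1 = Icc (g x) 1 := by
      ext t; exact ⟨fun ht => ⟨ht.1, ht.2.2⟩, fun ht => ⟨ht.1, (hg0 x).trans ht.1, ht.2⟩⟩
    rw [this, integral_indicator_const _ measurableSet_Ici,
      measureReal_restrict_apply measurableSet_Ici, hinter, Real.volume_real_Icc_of_le hx,
      smul_eq_mul]
  have inner_x : ∀ t ∈ Icc (0 : ℝ) 1,
      ∫ x in {x | g x ≤ 1}, F (x, t) ∂μ = ∫ x in {x | g x ≤ t}, h x ∂μ := by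
    intro t ht
    have hmt : MeasurableSet {x | g x ≤ t} := measurableSet_le hg measurable_const
    have : (fun x => F (x, t)) = {x | g x ≤ t}.indicator h := by
      ext x; simp [F, indicator_apply]
    have hsub : {x | g x ≤ t} ⊆ {x | g x ≤ 1} := fun x hx => le_trans hx ht.2
    rw [this, integral_indicator hmt, Measure.restrict_restrict hmt, inter_eq_left.2 hsub]
  rw [← setIntegral_congr_fun (measurableSet_le hg measurable_const) inner_t,
    integral_integral_swap (f := fun x t => F (x, t)) hF,
    setIntegral_congr_fun measurableSet_Icc inner_x]

section Homogeneous

variable {E : Type*} [NormedAddCommGroup E] [NormedSpace ℝ E] [FiniteDimensional ℝ E]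
  [MeasurableSpace E] [BorelSpace E] (μ : Measure E) [μ.IsAddHaarMeasure]

theorem setIntegral_sublevel_sq_eq {g h : E → ℝ} {k : ℕ}
    (hgs : ∀ (c : ℝ) x, g (c • x) = c ^ 2 * g x) (hhs : ∀ (c : ℝ) x, h (c • x) = c ^ k * h x)
    {c : ℝ} (hc : 0 < c) :
    ∫ x in {x | g x ≤ c ^ 2}, h x ∂μ = c ^ (finrank ℝ E + k) * ∫ x in {x | g x ≤ 1}, h x ∂μ := by
  have hset : {x | g x ≤ c ^ 2} = c • {x | g x ≤ 1} := by
    ext x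
    rw [mem_smul_set_iff_inv_smul_mem₀ hc.ne', mem_ofPred_eq, mem_ofPred_eq, hgs, inv_pow,
      inv_mul_le_iff₀ (by positivity), mul_one]
  have hscale := Measure.setIntegral_comp_smul_of_pos μ h {x | g x ≤ 1} hc
  simp only [hhs, integral_const_mul, smul_eq_mul] at hscale
  rw [hset, pow_add]
  field_simp at hscale ⊢
  linarith

theorem setIntegral_mul_eq_of_homogeneous {g h : E → ℝ} {k : ℕ} (hgm : Measurable g)
    (hg0 : ∀ x, 0 ≤ g x) (hgs : ∀ (c : ℝ) x, g (c • x) = c ^ 2 * g x)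
    (hhs : ∀ (c : ℝ) x, h (c • x) = c ^ k * h x) (hh : IntegrableOn h {x | g x ≤ 1} μ) :
    ∫ x in {x | g x ≤ 1}, g x * h x ∂μ =
      (finrank ℝ E + k) / (finrank ℝ E + k + 2) * ∫ x in {x | g x ≤ 1}, h x ∂μ := by
  set G := {x | g x ≤ 1}
  have hG : MeasurableSet G := measurableSet_le hgm measurable_const
  have hgh : IntegrableOn (fun x => g x * h x) G μ :=
    hh.bdd_mul (c := 1) hgm.aestronglyMeasurable <| (ae_restrict_mem hG).mono fun x hx => by
      rw [Real.norm_eq_abs, abs_le]; exact ⟨by linarith [hg0 x], hx⟩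
  have hsublevel : ∀ t ∈ Ioc (0 : ℝ) 1,
      ∫ x in {x | g x ≤ t}, h x ∂μ =
        t ^ ((finrank ℝ E + k : ℕ) / 2 : ℝ) * ∫ x in G, h x ∂μ := by
    intro t ht
    rw [← Real.sq_sqrt ht.1.le, setIntegral_sublevel_sq_eq μ hgs hhs (Real.sqrt_pos.2 ht.1),
      Real.sq_sqrt ht.1.le, Real.sqrt_eq_rpow, ← Real.rpow_natCast, ← Real.rpow_mul ht.1.le]
    congr 2
    ring
  have hlayer :
      ∫ x in G, (1 - g x) * h x ∂μ = 2 / ((finrank ℝ E + k : ℕ) + 2) * ∫ x in G, h x ∂μ := by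
    rw [setIntegral_one_sub_mul_eq_integral_setIntegral_sublevel hgm hg0 hh,
      integral_Icc_eq_integral_Ioc, setIntegral_congr_fun measurableSet_Ioc hsublevel,
      integral_mul_const, ← intervalIntegral.integral_of_le zero_le_one,
      integral_rpow (Or.inl (by
        linarith [show (0 : ℝ) ≤ (finrank ℝ E + k : ℕ) / 2 by positivity]))]
    congr 1
    rw [Real.one_rpow, Real.zero_rpow (by positivity)]
    field_simp
    ring
  have hsplit : ∫ x in G, (1 - g x) * h x ∂μ = ∫ x in G, h x ∂μ - ∫ x in G, g x * h x ∂μ := by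
    rw [← integral_sub hh hgh]
    congr 1 with x
    ring
  rw [hsplit] at hlayer
  push_cast at hlayer
  field_simp at hlayer ⊢
  linarith

end Homogeneous

theorem eventuallyEq_zero_of_setIntegral_sq_eq_zero {X : Type*} [TopologicalSpace X]
    [MeasurableSpace X] {μ : Measure X} [μ.IsOpenPosMeasure] {f : X → ℝ} {s : Set X} {x : X}
    (hf : ContinuousOn f s) (hs : s ∈ 𝓝 x) (hfs : IntegrableOn (fun y => f y ^ 2) s μ)
    (h : ∫ y in s, f y ^ 2 ∂μ = 0) : f =ᶠ[𝓝 x] 0 := by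
  obtain ⟨U, hUs, hU, hxU⟩ := mem_nhds_iff.1 hs
  have hae : (fun y => f y ^ 2) =ᵐ[μ.restrict s] 0 :=
    (integral_eq_zero_iff_of_nonneg (fun y => sq_nonneg (f y)) hfs).1 h
  have hU0 := Measure.eqOn_open_of_ae_eq (ae_restrict_of_ae_restrict_of_subset hUs hae) hU
    ((hf.mono hUs).pow 2) continuousOn_const
  filter_upwards [hU.mem_nhds hxU] with y hy
  exact pow_eq_zero_iff two_ne_zero |>.1 (hU0 hy)

theorem eq_zero_of_homogeneous_of_eventuallyEq_zero {E : Type*} [AddCommGroup E] [Module ℝ E]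
    [TopologicalSpace E] [ContinuousSMul ℝ E] {P : E → ℝ} {k : ℕ}
    (hP : ∀ (c : ℝ) x, P (c • x) = c ^ k * P x) (h0 : P =ᶠ[𝓝 0] 0) : P = 0 := by
  funext y
  have hlim : Tendsto (fun c : ℝ => c • y) (𝓝[≠] 0) (𝓝 0) :=
    tendsto_nhdsWithin_of_tendsto_nhds
      ((continuous_id.smul continuous_const).tendsto' 0 0 (zero_smul ℝ y))
  obtain ⟨c, hc, hc0⟩ := ((hlim.eventually h0).and self_mem_nhdsWithin).exists
  rw [Pi.zero_apply, hP] at hc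
  exact (mul_eq_zero.1 hc).resolve_left (pow_ne_zero k hc0)

theorem integral_mul_add_mul_add_mul {α : Type*} [MeasurableSpace α] {μ : Measure α}
    {f₁ f₂ f₃ : α → ℝ} (h₁ : Integrable f₁ μ) (h₂ : Integrable f₂ μ) (h₃ : Integrable f₃ μ)
    (a b c : ℝ) :
    ∫ x, (a * f₁ x + b * f₂ x + c * f₃ x) ∂μ =
      a * ∫ x, f₁ x ∂μ + b * ∫ x, f₂ x ∂μ + c * ∫ x, f₃ x ∂μ := by
  rw [integral_add (f := fun x => a * f₁ x + b * f₂ x) ((h₁.const_mul a).add (h₂.const_mul b))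
      (h₃.const_mul c),
    integral_add (h₁.const_mul a) (h₂.const_mul b), integral_const_mul, integral_const_mul,
    integral_const_mul]

def binaryQuadForm (a b c : ℝ) (x : Fin 2 → ℝ) : ℝ :=
  a * x 0 ^ 2 + b * (x 0 * x 1) + c * x 1 ^ 2

@[fun_prop]
theorem continuous_binaryQuadForm (a b c : ℝ) : Continuous (binaryQuadForm a b c) := by
  unfold binaryQuadForm; fun_prop

theorem binaryQuadForm_smul (a b c t : ℝ) (x : Fin 2 → ℝ) :
    binaryQuadForm a b c (t • x) = t ^ 2 * binaryQuadForm a b c x := by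
  simp only [binaryQuadForm, Pi.smul_apply, smul_eq_mul]; ring

theorem monomial_smul (i j : ℕ) (t : ℝ) (x : Fin 2 → ℝ) :
    (t • x) 0 ^ i * (t • x) 1 ^ j = t ^ (i + j) * (x 0 ^ i * x 1 ^ j) := by
  simp only [Pi.smul_apply, smul_eq_mul]; ring

theorem eq_zero_of_binaryQuadForm_eq_zero {a b c : ℝ} (h : binaryQuadForm a b c = 0) :
    a = 0 ∧ b = 0 ∧ c = 0 := by
  have h₁ := congrFun h ![1, 0]
  have h₂ := congrFun h ![0, 1]
  have h₃ := congrFun h ![1, 1]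
  simp [binaryQuadForm] at h₁ h₂ h₃
  exact ⟨h₁, by linarith, h₂⟩

noncomputable def ellipseMoment (a b c : ℝ) (i j : ℕ) : ℝ :=
  ∫ x in {x | binaryQuadForm a b c x ≤ 1}, x 0 ^ i * x 1 ^ j

section Ellipse

variable {a b c : ℝ} (hpd : ∀ x, x ≠ 0 → 0 < binaryQuadForm a b c x)
include hpd

theorem binaryQuadForm_nonneg (x : Fin 2 → ℝ) : 0 ≤ binaryQuadForm a b c x := by
  rcases eq_or_ne x 0 with rfl | hx
  · simp [binaryQuadForm]
  · exact (hpd x hx).le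

theorem integrableOn_ellipse {f : (Fin 2 → ℝ) → ℝ} (hf : Continuous f) :
    IntegrableOn f {x | binaryQuadForm a b c x ≤ 1} :=
  hf.continuousOn.integrableOn_compact <| isCompact_sublevel_of_homogeneous
    (continuous_binaryQuadForm a b c) (binaryQuadForm_smul a b c) hpd 1

theorem ellipseMoment_comb_eq_setIntegral (p q r : ℝ) (i j : ℕ) :
    p * ellipseMoment a b c (i + 2) j + q * ellipseMoment a b c (i + 1) (j + 1)
        + r * ellipseMoment a b c i (j + 2) =
      ∫ x in {x | binaryQuadForm a b c x ≤ 1}, binaryQuadForm p q r x * (x 0 ^ i * x 1 ^ j) := by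
  rw [ellipseMoment, ellipseMoment, ellipseMoment, ← integral_mul_add_mul_add_mul
    (integrableOn_ellipse hpd (by fun_prop)) (integrableOn_ellipse hpd (by fun_prop))
    (integrableOn_ellipse hpd (by fun_prop))]
  congr 1 with x
  simp only [binaryQuadForm]; ring

theorem ellipseMoment_comb_self_eq {i j : ℕ} (hij : i + j = 2) :
    a * ellipseMoment a b c (i + 2) j + b * ellipseMoment a b c (i + 1) (j + 1)
        + c * ellipseMoment a b c i (j + 2) = 2 / 3 * ellipseMoment a b c i j := by
  rw [ellipseMoment_comb_eq_setIntegral hpd, setIntegral_mul_eq_of_homogeneous volume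
    (continuous_binaryQuadForm a b c).measurable (binaryQuadForm_nonneg hpd)
    (binaryQuadForm_smul a b c) (monomial_smul i j) (integrableOn_ellipse hpd (by fun_prop)),
    hij, Module.finrank_fin_fun, ellipseMoment]
  norm_num

theorem eq_zero_of_ellipseMoment_comb_eq_zero {p q r : ℝ}
    (h₁ : p * ellipseMoment a b c 4 0 + q * ellipseMoment a b c 3 1
      + r * ellipseMoment a b c 2 2 = 0)
    (h₂ : p * ellipseMoment a b c 3 1 + q * ellipseMoment a b c 2 2
      + r * ellipseMoment a b c 1 3 = 0)
    (h₃ : p * ellipseMoment a b c 2 2 + q * ellipseMoment a b c 1 3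
      + r * ellipseMoment a b c 0 4 = 0) :
    p = 0 ∧ q = 0 ∧ r = 0 := by
  set Q := binaryQuadForm p q r with hQ
  have hQ_sq : ∫ x in {x | binaryQuadForm a b c x ≤ 1}, Q x ^ 2 = 0 := by
    calc ∫ x in {x | binaryQuadForm a b c x ≤ 1}, Q x ^ 2
        = ∫ x in {x | binaryQuadForm a b c x ≤ 1}, (p * (Q x * (x 0 ^ 2 * x 1 ^ 0))
            + q * (Q x * (x 0 ^ 1 * x 1 ^ 1)) + r * (Q x * (x 0 ^ 0 * x 1 ^ 2))) := by
          congr 1 with x; simp only [hQ, binaryQuadForm]; ring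
      _ = 0 := by
          rw [integral_mul_add_mul_add_mul (integrableOn_ellipse hpd (by fun_prop))
            (integrableOn_ellipse hpd (by fun_prop)) (integrableOn_ellipse hpd (by fun_prop)),
            hQ, ← ellipseMoment_comb_eq_setIntegral hpd, ← ellipseMoment_comb_eq_setIntegral hpd,
            ← ellipseMoment_comb_eq_setIntegral hpd]
          linear_combination p * h₁ + q * h₂ + r * h₃
  have hellipse : {x | binaryQuadForm a b c x ≤ 1} ∈ 𝓝 0 :=
    (continuous_binaryQuadForm a b c).continuousAt.preimage_mem_nhds
      (Iic_mem_nhds (by simp [binaryQuadForm]))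
  exact eq_zero_of_binaryQuadForm_eq_zero <|
    eq_zero_of_homogeneous_of_eventuallyEq_zero (binaryQuadForm_smul p q r) <|
      eventuallyEq_zero_of_setIntegral_sq_eq_zero (continuous_binaryQuadForm p q r).continuousOn
        hellipse (integrableOn_ellipse hpd (by fun_prop)) hQ_sq

end Ellipse

/-- The `n = 2`, `d = 2` instance: for a positive definite quadratic form
`g(x) = g₂₀x₁² + g₁₁x₁x₂ + g₀₂x₂²` with sublevel set `G` (an ellipse) and moments
`λᵢⱼ = ∫_G x₁ⁱx₂ʲ dx`, the coefficients satisfy the linear system with matrix rows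
`(λ₄₀,λ₃₁,λ₂₂), (λ₃₁,λ₂₂,λ₁₃), (λ₂₂,λ₁₃,λ₀₄)` and right-hand side
`(2/3)(λ₂₀,λ₁₁,λ₀₂)`, and this system has a unique solution. -/
theorem quadratic_form_recovery (g20 g11 g02 : ℝ)
    (hpd : ∀ x : Fin 2 → ℝ, x ≠ 0 →
      0 < g20 * x 0 ^ 2 + g11 * (x 0 * x 1) + g02 * x 1 ^ 2)
    (lam : ℕ → ℕ → ℝ)
    (hlam : ∀ i j : ℕ, lam i j =
      ∫ x in {x : Fin 2 → ℝ |
          g20 * x 0 ^ 2 + g11 * (x 0 * x 1) + g02 * x 1 ^ 2 ≤ 1},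
        x 0 ^ i * x 1 ^ j) :
    (g20 * lam 4 0 + g11 * lam 3 1 + g02 * lam 2 2 = (2 / 3) * lam 2 0 ∧
     g20 * lam 3 1 + g11 * lam 2 2 + g02 * lam 1 3 = (2 / 3) * lam 1 1 ∧
     g20 * lam 2 2 + g11 * lam 1 3 + g02 * lam 0 4 = (2 / 3) * lam 0 2) ∧
    ∀ a b c : ℝ,
      (a * lam 4 0 + b * lam 3 1 + c * lam 2 2 = (2 / 3) * lam 2 0 ∧
       a * lam 3 1 + b * lam 2 2 + c * lam 1 3 = (2 / 3) * lam 1 1 ∧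
       a * lam 2 2 + b * lam 1 3 + c * lam 0 4 = (2 / 3) * lam 0 2) →
      a = g20 ∧ b = g11 ∧ c = g02 := by
  obtain rfl : lam = ellipseMoment g20 g11 g02 := funext₂ hlam
  have e₁ := ellipseMoment_comb_self_eq hpd (i := 2) (j := 0) rfl
  have e₂ := ellipseMoment_comb_self_eq hpd (i := 1) (j := 1) rfl
  have e₃ := ellipseMoment_comb_self_eq hpd (i := 0) (j := 2) rfl
  refine ⟨⟨e₁, e₂, e₃⟩, fun a b c ⟨h₁, h₂, h₃⟩ => ?_⟩
  obtain ⟨ha, hb, hc⟩ := eq_zero_of_ellipseMoment_comb_eq_zero hpd (p := a - g20) (q := b - g11)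
    (r := c - g02) (by linear_combination h₁ - e₁) (by linear_combination h₂ - e₂)
    (by linear_combination h₃ - e₃)
  exact ⟨by linarith, by linarith, by linarith⟩
end
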